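/- arXiv:2505.10776 — 4 statements merged into one kernel-verified Lean document; each statement's English description precedes it below -/
import Mathlib

section
/- Let (a_i)_{i≥1} and (v_i)_{i≥1} be sequences of nonnegative reals with A := Σ_{i=1}^∞ a_i < 1 and V := Σ_{i=1}^∞ v_i < ∞. Define G₁(1)=1, G₁(k)=1+Σ_{i=1}^{k-1} a_i G₁(k-i), and G₂(1)=0, G₂(k)=Σ_{i=1}^{k-1} a_i G₂(k-i) + (1/2) Σ_{i=1}^{k-1} v_i G₁(k-i)² for k ≥ 2. Then for every n ≥ 1, G₂(n) ≤ V/(2(1-A)³). -/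
/-!
Both recursions are discrete renewal equations `G k = ∑_{i<k} a i G (k - i) + c k` with total
mass `A < 1`. If the forcing term is bounded by `c` and `B ≥ 0` satisfies `A B + c ≤ B`, strong
induction gives `G ≤ B`. For `G₂` the forcing term is at most `V / (2 (1 - A)²)` by the bound on
`0 ≤ G₁`, and `B = V / (2 (1 - A)³)` solves `A B + V / (2 (1 - A)²) = B`.
-/

open Finset

lemma sum_Icc_one_le_tsum_succ {f : ℕ → ℝ} (hf : ∀ i, 0 ≤ f i)
    (hs : Summable fun i => f (i + 1)) (m : ℕ) :
    ∑ i ∈ Icc 1 m, f i ≤ ∑' i, f (i + 1) := by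
  have hreindex : ∑ i ∈ Icc 1 m, f i = ∑ i ∈ range m, f (i + 1) := by
    rw [range_eq_Ico, sum_Ico_add', ← Ico_add_one_right_eq_Icc]
  exact hreindex ▸ hs.sum_le_tsum _ fun i _ => hf _

lemma sum_mul_le_mul_of_sum_le {ι : Type*} {s : Finset ι} {w x : ι → ℝ} {W M : ℝ}
    (hw : ∀ i ∈ s, 0 ≤ w i) (hW : ∑ i ∈ s, w i ≤ W) (hx : ∀ i ∈ s, x i ≤ M) (hM : 0 ≤ M) :
    ∑ i ∈ s, w i * x i ≤ W * M :=
  calc ∑ i ∈ s, w i * x i ≤ ∑ i ∈ s, w i * M :=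
        sum_le_sum fun i hi => mul_le_mul_of_nonneg_left (hx i hi) (hw i hi)
    _ = (∑ i ∈ s, w i) * M := (sum_mul ..).symm
    _ ≤ W * M := mul_le_mul_of_nonneg_right hW hM

section Renewal

variable {a G : ℕ → ℝ}

lemma renewal_nonneg (ha : ∀ i, 0 ≤ a i) (h1 : 0 ≤ G 1)
    (hrec : ∀ k ≥ 2, ∑ i ∈ Icc 1 (k - 1), a i * G (k - i) ≤ G k) :
    ∀ n ≥ 1, 0 ≤ G n := by
  intro n
  induction n using Nat.strong_induction_on with
  | _ n ih =>
    intro hn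
    obtain rfl | hn2 : n = 1 ∨ 2 ≤ n := by omega
    · exact h1
    · refine le_trans (sum_nonneg fun i hi => ?_) (hrec n hn2)
      rw [mem_Icc] at hi
      exact mul_nonneg (ha i) (ih (n - i) (by omega) (by omega))

lemma renewal_le {A B c : ℝ} (ha : ∀ i, 0 ≤ a i) (hA : ∀ m, ∑ i ∈ Icc 1 m, a i ≤ A)
    (hB : 0 ≤ B) (hABc : A * B + c ≤ B) (h1 : G 1 ≤ B)
    (hrec : ∀ k ≥ 2, G k ≤ ∑ i ∈ Icc 1 (k - 1), a i * G (k - i) + c) :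
    ∀ n ≥ 1, G n ≤ B := by
  intro n
  induction n using Nat.strong_induction_on with
  | _ n ih =>
    intro hn
    obtain rfl | hn2 : n = 1 ∨ 2 ≤ n := by omega
    · exact h1
    · have hsum : ∑ i ∈ Icc 1 (n - 1), a i * G (n - i) ≤ A * B :=
        sum_mul_le_mul_of_sum_le (fun i _ => ha i) (hA _)
          (fun i hi => ih (n - i) (by rw [mem_Icc] at hi; omega) (by rw [mem_Icc] at hi; omega))
          hB
      linarith [hrec n hn2]

end Renewal

/-- Lemma 2 (technical lemma for MDP): the second-order sequence `G₂` is bounded by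
`V/(2(1-A)³)`. -/
theorem inar_G2_bound (a v : ℕ → ℝ) (ha : ∀ i, 0 ≤ a i) (hv : ∀ i, 0 ≤ v i)
    (hsuma : Summable (fun i => a (i + 1)))
    (hA : (∑' i : ℕ, a (i + 1)) < 1)
    (hsumv : Summable (fun i => v (i + 1)))
    (G1 G2 : ℕ → ℝ) (hG11 : G1 1 = 1)
    (hG1 : ∀ k ≥ 2, G1 k = 1 + ∑ i ∈ Finset.Icc 1 (k - 1), a i * G1 (k - i))
    (hG21 : G2 1 = 0)
    (hG2 : ∀ k ≥ 2, G2 k = (∑ i ∈ Finset.Icc 1 (k - 1), a i * G2 (k - i))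
      + (1 / 2) * ∑ i ∈ Finset.Icc 1 (k - 1), v i * (G1 (k - i)) ^ 2)
    (hG1bd : ∀ n ≥ 1, G1 n ≤ 1 / (1 - ∑' i : ℕ, a (i + 1))) :
    ∀ n ≥ 1, G2 n ≤ (∑' i : ℕ, v (i + 1)) / (2 * (1 - ∑' i : ℕ, a (i + 1)) ^ 3) := by
  set A := ∑' i : ℕ, a (i + 1)
  set V := ∑' i : ℕ, v (i + 1)
  have h1A : 0 < 1 - A := by linarith
  have hV : 0 ≤ V := tsum_nonneg fun i => hv _
  have hG1nn : ∀ n ≥ 1, 0 ≤ G1 n :=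
    renewal_nonneg ha (by rw [hG11]; exact zero_le_one) fun k hk => by rw [hG1 k hk]; linarith
  have hforcing : ∀ k ≥ 2, ∑ i ∈ Icc 1 (k - 1), v i * G1 (k - i) ^ 2 ≤ V * (1 / (1 - A)) ^ 2 :=
    fun k _ => sum_mul_le_mul_of_sum_le (fun i _ => hv i) (sum_Icc_one_le_tsum_succ hv hsumv _)
      (fun i hi => by
        rw [mem_Icc] at hi
        exact pow_le_pow_left₀ (hG1nn _ (by omega)) (hG1bd _ (by omega)) 2)
      (by positivity)
  refine renewal_le ha (sum_Icc_one_le_tsum_succ ha hsuma) (by positivity)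
    (c := 1 / 2 * (V * (1 / (1 - A)) ^ 2)) (le_of_eq ?_) (by rw [hG21]; positivity)
    fun k hk => by rw [hG2 k hk]; linarith [hforcing k hk]
  field_simp
  ring
end

section
/- Let (a_i)_{i≥1} be nonnegative reals with A := Σ_{i=1}^∞ a_i < 1. Define G₁(1)=1 and G₁(k)=1+Σ_{i=1}^{k-1} a_i G₁(k-i) for k ≥ 2. Then (1/n) Σ_{k=1}^n G₁(k) → 1/(1-A) as n → ∞. -/
open Filter Finset Topology

/-!
Write `c i = a (i + 1)`, so that `G₁ (n + 1) = 1 + ∑_{j < n} c j G₁ (n - j)`. By strong induction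
`G₁` is nondecreasing: `G₁ (n + 2) - G₁ (n + 1) = c n + ∑_{j < n} c j (G₁ (n + 1 - j) - G₁ (n - j))`.
Monotonicity then bounds the recurrence by `G₁ (n + 1) ≤ 1 + A G₁ (n + 1)`, so `G₁` converges to some
`L ≤ 1 / (1 - A)`. Passing to the limit in the recurrence by dominated convergence gives
`L = 1 + A L`, and Cesàro means of a convergent sequence have the same limit.
-/

theorem sum_Icc_one_eq_sum_range {M : Type*} [AddCommMonoid M] (f : ℕ → M) (n : ℕ) :
    ∑ i ∈ Icc 1 n, f i = ∑ j ∈ range n, f (j + 1) := by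
  rw [range_eq_Ico, sum_Ico_add', zero_add, Ico_add_one_right_eq_Icc]

theorem Summable.tendsto_sum_range_mul_sub {a b : ℕ → ℝ} {L : ℝ} (ha : Summable a)
    (hb : Tendsto b atTop (𝓝 L)) :
    Tendsto (fun k => ∑ i ∈ range k, a i * b (k - i)) atTop (𝓝 ((∑' i, a i) * L)) := by
  obtain ⟨C, hC⟩ := isBounded_iff_forall_norm_le.mp (Metric.isBounded_range_of_tendsto b hb)
  have hbC : ∀ n, ‖b n‖ ≤ C := fun n => hC _ ⟨n, rfl⟩
  set f : ℕ → ℕ → ℝ := fun k i => if i < k then a i * b (k - i) else 0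
  have hsum_eq : ∀ k, ∑ i ∈ range k, a i * b (k - i) = ∑' i, f k i := by
    intro k
    rw [tsum_eq_sum (s := range k) fun i hi => if_neg (by simpa using hi)]
    exact sum_congr rfl fun i hi => (if_pos (mem_range.1 hi)).symm
  simp_rw [hsum_eq, ← tsum_mul_right]
  refine tendsto_tsum_of_dominated_convergence (ha.abs.mul_right C) (fun i => ?_)
    (Eventually.of_forall fun k i => ?_)
  · refine ((hb.comp (tendsto_sub_atTop_nat i)).const_mul (a i)).congr' ?_
    filter_upwards [eventually_gt_atTop i] with k hk
    exact (if_pos hk).symm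
  · simp only [f]
    split_ifs
    · rw [norm_mul]
      exact mul_le_mul_of_nonneg_left (hbC _) (norm_nonneg _)
    · simpa using mul_nonneg (abs_nonneg (a i)) ((norm_nonneg _).trans (hbC 0))

section Renewal

variable {c G : ℕ → ℝ} (hG : ∀ n, G (n + 1) = 1 + ∑ j ∈ range n, c j * G (n - j))
include hG

theorem monotone_of_renewal (hc : ∀ i, 0 ≤ c i) : Monotone fun n => G (n + 1) := by
  refine monotone_nat_of_le_succ fun n => ?_
  induction n using Nat.strong_induction_on with
  | _ n ih =>
    have hG1 : G 1 = 1 := by simpa using hG 0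
    have hterm : ∀ j ∈ range n, c j * G (n - j) ≤ c j * G (n + 1 - j) := by
      intro j hj
      have hjn := mem_range.1 hj
      have hstep := ih (n - j - 1) (by omega)
      rw [show n - j - 1 + 1 = n - j by omega, show n - j + 1 = n + 1 - j by omega] at hstep
      exact mul_le_mul_of_nonneg_left hstep (hc j)
    show G (n + 1) ≤ G (n + 1 + 1)
    rw [hG n, hG (n + 1), sum_range_succ, Nat.add_sub_cancel_left, hG1, mul_one]
    linarith [sum_le_sum hterm, hc n]

theorem le_inv_one_sub_tsum_of_renewal (hc : ∀ i, 0 ≤ c i) (hcs : Summable c) (hc1 : ∑' i, c i < 1)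
    (n : ℕ) : G (n + 1) ≤ (1 - ∑' i, c i)⁻¹ := by
  have hmono := monotone_of_renewal hG hc
  have hpos : 0 ≤ G (n + 1) := by
    have : G 1 ≤ G (n + 1) := hmono (Nat.zero_le n)
    linarith [show G 1 = 1 by simpa using hG 0]
  have hterm : ∀ j ∈ range n, c j * G (n - j) ≤ c j * G (n + 1) := by
    intro j hj
    have hle : G (n - j - 1 + 1) ≤ G (n + 1) := hmono (by omega)
    have hjn := mem_range.1 hj
    rw [show n - j - 1 + 1 = n - j by omega] at hle
    exact mul_le_mul_of_nonneg_left hle (hc j)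
  have hpartial : (∑ j ∈ range n, c j) * G (n + 1) ≤ (∑' i, c i) * G (n + 1) :=
    mul_le_mul_of_nonneg_right (hcs.sum_le_tsum _ fun i _ => hc i) hpos
  rw [← one_div, le_div_iff₀ (by linarith)]
  have hsum_le := sum_le_sum hterm
  rw [← sum_mul] at hsum_le
  linarith [hG n]

theorem tendsto_inv_one_sub_tsum_of_renewal (hc : ∀ i, 0 ≤ c i) (hcs : Summable c)
    (hc1 : ∑' i, c i < 1) : Tendsto (fun n => G (n + 1)) atTop (𝓝 (1 - ∑' i, c i)⁻¹) := by
  obtain ⟨L, hL⟩ : ∃ L, Tendsto (fun n => G (n + 1)) atTop (𝓝 L) :=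
    ⟨_, tendsto_atTop_ciSup (monotone_of_renewal hG hc)
      ⟨_, Set.forall_mem_range.2 (le_inv_one_sub_tsum_of_renewal hG hc hcs hc1)⟩⟩
  have hconv : Tendsto (fun n => G (n + 1)) atTop (𝓝 (1 + (∑' i, c i) * L)) := by
    simp_rw [hG]
    exact (hcs.tendsto_sum_range_mul_sub ((tendsto_add_atTop_iff_nat 1).1 hL)).const_add 1
  have hfix : L = 1 + (∑' i, c i) * L := tendsto_nhds_unique hL hconv
  have hL_eq : L = (1 - ∑' i, c i)⁻¹ := eq_inv_of_mul_eq_one_left (by linear_combination hfix)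
  rwa [hL_eq] at hL

end Renewal

/-- Cesàro convergence of the renewal sequence `G₁`: `(1/n) ∑_{k=1}^n G₁(k) → 1/(1-A)`. -/
theorem inar_G1_cesaro (a : ℕ → ℝ) (ha : ∀ i, 0 ≤ a i)
    (hsum : Summable (fun i => a (i + 1)))
    (hA : (∑' i : ℕ, a (i + 1)) < 1)
    (G1 : ℕ → ℝ) (hG11 : G1 1 = 1)
    (hG1 : ∀ k ≥ 2, G1 k = 1 + ∑ i ∈ Finset.Icc 1 (k - 1), a i * G1 (k - i)) :
    Tendsto (fun n : ℕ => (∑ k ∈ Finset.Icc 1 n, G1 k) / (n : ℝ)) atTop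
      (nhds (1 / (1 - ∑' i : ℕ, a (i + 1)))) := by
  have hrec : ∀ n, G1 (n + 1) = 1 + ∑ j ∈ range n, a (j + 1) * G1 (n - j) := by
    rintro (_ | n)
    · simp [hG11]
    · rw [hG1 (n + 1 + 1) (by omega), Nat.add_sub_cancel, sum_Icc_one_eq_sum_range]
      congr 1
      refine sum_congr rfl fun j _ => ?_
      congr 2
      omega
  have hlim := tendsto_inv_one_sub_tsum_of_renewal hrec (fun i => ha _) hsum hA
  rw [one_div]
  refine hlim.cesaro.congr fun n => ?_
  rw [sum_Icc_one_eq_sum_range, div_eq_inv_mul]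
end

section
/- Consider an INAR(∞) process with empty history: X₁ = ε₁ and X_n = ε_n + Σ_{k=1}^{n-1} Σ_{l=1}^{X_{n-k}} ξ_l^{(n,k)} for n ≥ 2, where ε_n are i.i.d. copies of ε, ξ_l^{(n,k)} are i.i.d. copies of ξ_k over n and l, independent of (ε_n), and independent across distinct k. Then for any θ for which all expressions are finite, E[exp(θ Σ_{k=1}^n X_k)] = Π_{k=1}^n E[e^{f_k(θ) ε}], where f₁(θ) = θ and f_k(θ) = θ + Σ_{j=1}^{k-1} log E[e^{f_j(θ) ξ_{k-j}}] for k ≥ 2. -/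
/-!
Work with probability generating functions in `ℝ≥0∞`, where nothing needs to be integrable.
Given all noise up to time `M`, `X (M + 1)` is `ε (M + 1)` plus, for each `k`, a sum of
`X (M + 1 - k)` fresh copies of `ξ k`, independent of the past. By the freezing lemma, integrating
`X (M + 1)` out of `E[∏_{m ≤ M + 1} s m ^ X m]` gives the factor `pgf ε (s (M + 1))` and multiplies
each remaining `s m` by `pgf (ξ (M + 1 - m)) (s (M + 1))`. Peeling off `X n, X (n - 1), …` starting
from `s ≡ e^θ`, the `r`-th variable removed carries the exponent `e^{f_r(θ)}`, which gives the
product formula; the real identity follows on taking `ENNReal.ofReal`.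
-/

open MeasureTheory ProbabilityTheory Finset
open scoped ENNReal

section Reindexing

variable {M : Type*} [CommMonoid M]

@[to_additive sum_Icc_one_eq_sum_fin]
theorem prod_Icc_one_eq_prod_fin (f : ℕ → M) (n : ℕ) :
    ∏ k ∈ Icc 1 n, f k = ∏ j : Fin n, f (j + 1) := by
  rw [Fin.prod_univ_eq_prod_range (fun j => f (j + 1)), range_eq_Ico, prod_Ico_add' f 0 n 1,
    zero_add, Ico_add_one_right_eq_Icc]

@[to_additive sum_Icc_one_eq_sum_fin_rev]
theorem prod_Icc_one_eq_prod_fin_rev (f : ℕ → M) (n : ℕ) :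
    ∏ k ∈ Icc 1 n, f k = ∏ j : Fin n, f (n - j) := by
  rw [prod_Icc_one_eq_prod_fin, ← Fintype.prod_equiv Fin.revPerm _ _ fun j => rfl]
  refine Fintype.prod_congr _ _ fun j => ?_
  simp only [Fin.revPerm_apply, Fin.val_rev]
  congr 1
  omega

end Reindexing

section Freezing

variable {Ω α : Type*}
  [Countable α] [MeasurableSpace α] [MeasurableSingletonClass α]

theorem lintegral_comp_eq_tsum_setLIntegral {mΩ : MeasurableSpace Ω} {μ : Measure Ω}
    {Y : Ω → α} (hY : Measurable Y) (χ : α → Ω → ℝ≥0∞) :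
    ∫⁻ ω, χ (Y ω) ω ∂μ = ∑' a, ∫⁻ ω in Y ⁻¹' {a}, χ a ω ∂μ := by
  have hcover : (⋃ a, Y ⁻¹' {a}) = Set.univ := by ext; simp
  rw [← setLIntegral_univ, ← hcover,
    lintegral_iUnion (fun a => hY (measurableSet_singleton a)) (pairwise_disjoint_fiber Y)]
  exact tsum_congr fun a =>
    setLIntegral_congr_fun (hY (measurableSet_singleton a)) fun ω hω => by rw [hω]

/-- The freezing lemma, in integrated form. -/
theorem lintegral_mul_comp_eq_of_indep {m₁ m₂ mΩ : MeasurableSpace Ω} {μ : Measure Ω}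
    (h₁ : m₁ ≤ mΩ) (h₂ : m₂ ≤ mΩ) (hind : Indep m₁ m₂ μ) {Y : Ω → α} (hY : Measurable[m₁] Y)
    {φ : Ω → ℝ≥0∞} (hφ : Measurable[m₁] φ) {ψ : α → Ω → ℝ≥0∞}
    (hψ : ∀ a, Measurable[m₂] (ψ a)) :
    ∫⁻ ω, φ ω * ψ (Y ω) ω ∂μ = ∫⁻ ω, φ ω * ∫⁻ ω', ψ (Y ω) ω' ∂μ ∂μ := by
  have hY' : Measurable Y := hY.mono h₁ le_rfl
  rw [lintegral_comp_eq_tsum_setLIntegral hY' fun a ω => φ ω * ψ a ω,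
    lintegral_comp_eq_tsum_setLIntegral hY' fun a ω => φ ω * ∫⁻ ω', ψ a ω' ∂μ]
  refine tsum_congr fun a => ?_
  have hA : MeasurableSet[m₁] (Y ⁻¹' {a}) := hY (measurableSet_singleton a)
  have hφA : Measurable[m₁] ((Y ⁻¹' {a}).indicator φ) := hφ.indicator hA
  simp_rw [← lintegral_indicator (h₁ _ hA), Set.indicator_mul_left]
  rw [lintegral_mul_eq_lintegral_mul_lintegral_of_independent_measurableSpace h₁ h₂ hind hφA
      (hψ a), lintegral_mul_const _ (hφA.mono h₁ le_rfl)]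

end Freezing

section GeneratingFunction

variable {Ω : Type*} {mΩ : MeasurableSpace Ω} {μ : Measure Ω}

/-- Taken in `ℝ≥0∞`, so that it is defined without any integrability assumption. -/
noncomputable def pgf (μ : Measure Ω) (Z : Ω → ℕ) (s : ℝ≥0∞) : ℝ≥0∞ := ∫⁻ ω, s ^ Z ω ∂μ

theorem pgf_eq_of_map_eq {Z Z' : Ω → ℕ} (hZ : Measurable Z) (hZ' : Measurable Z')
    (h : μ.map Z = μ.map Z') (s : ℝ≥0∞) : pgf μ Z s = pgf μ Z' s := by
  rw [pgf, pgf, ← lintegral_map measurable_from_nat hZ, h, lintegral_map measurable_from_nat hZ']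

theorem ofReal_integral_exp_mul_eq_pgf {Z : Ω → ℕ} {c : ℝ}
    (h : Integrable (fun ω => Real.exp (c * Z ω)) μ) :
    ENNReal.ofReal (∫ ω, Real.exp (c * Z ω) ∂μ) = pgf μ Z (ENNReal.ofReal (Real.exp c)) := by
  rw [ofReal_integral_eq_lintegral_ofReal h (ae_of_all _ fun ω => (Real.exp_pos _).le)]
  refine lintegral_congr fun ω => ?_
  rw [mul_comm, Real.exp_nat_mul, ENNReal.ofReal_pow (Real.exp_pos c).le]

end GeneratingFunction

theorem measurable_sum_Icc_one {α : Type*} {mα : MeasurableSpace α} {N : α → ℕ}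
    (hN : Measurable N) {g : ℕ → α → ℕ} (hg : ∀ l, Measurable (g l)) :
    Measurable fun ω => ∑ l ∈ Icc 1 (N ω), g l ω := by
  have h : Measurable fun p : α × ℕ => ∑ l ∈ Icc 1 p.2, g l p.1 :=
    measurable_from_prod_countable_left fun n => by
      simpa using Finset.measurable_sum (Icc 1 n) fun l _ => hg l
  exact h.comp (measurable_id.prodMk hN)

namespace INAR

variable {Ω : Type*} {mΩ : MeasurableSpace Ω} {μ : Measure Ω}
  {ε : ℕ → Ω → ℕ} {ξ : ℕ → ℕ → ℕ → Ω → ℕ} {ε0 : Ω → ℕ} {ξ0 : ℕ → Ω → ℕ}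

def noise (ε : ℕ → Ω → ℕ) (ξ : ℕ → ℕ → ℕ → Ω → ℕ) : ℕ ⊕ ℕ × ℕ × ℕ → Ω → ℕ :=
  Sum.elim ε fun p => ξ p.1 p.2.1 p.2.2

def time : ℕ ⊕ ℕ × ℕ × ℕ → ℕ := Sum.elim id Prod.fst

abbrev noiseσ (ε : ℕ → Ω → ℕ) (ξ : ℕ → ℕ → ℕ → Ω → ℕ) (S : Set (ℕ ⊕ ℕ × ℕ × ℕ)) :
    MeasurableSpace Ω :=
  ⨆ i ∈ S, MeasurableSpace.comap (noise ε ξ i) inferInstance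

theorem measurable_noise_of_mem {S : Set (ℕ ⊕ ℕ × ℕ × ℕ)} {i : ℕ ⊕ ℕ × ℕ × ℕ} (hi : i ∈ S) :
    Measurable[noiseσ ε ξ S] (noise ε ξ i) :=
  Measurable.of_comap_le (le_iSup₂ (f := fun i (_ : i ∈ S) =>
    MeasurableSpace.comap (noise ε ξ i) inferInstance) i hi)

theorem noiseσ_le (hmeas : ∀ i, Measurable (noise ε ξ i)) (S : Set (ℕ ⊕ ℕ × ℕ × ℕ)) :
    noiseσ ε ξ S ≤ mΩ :=
  iSup₂_le fun i _ => (hmeas i).comap_le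

theorem indep_noiseσ_compl (hmeas : ∀ i, Measurable (noise ε ξ i))
    (hindep : iIndepFun (noise ε ξ) μ) (S : Set (ℕ ⊕ ℕ × ℕ × ℕ)) :
    Indep (noiseσ ε ξ S) (noiseσ ε ξ Sᶜ) μ :=
  indep_biSup_compl (fun i => (hmeas i).comap_le) hindep S

structure IsNoise (μ : Measure Ω) (ε : ℕ → Ω → ℕ) (ξ : ℕ → ℕ → ℕ → Ω → ℕ) (ε0 : Ω → ℕ)
    (ξ0 : ℕ → Ω → ℕ) : Prop where
  measurable_ε : ∀ n, Measurable (ε n)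
  measurable_ξ : ∀ n k l, Measurable (ξ n k l)
  measurable_ε0 : Measurable ε0
  measurable_ξ0 : ∀ k, Measurable (ξ0 k)
  map_ε : ∀ n, μ.map (ε n) = μ.map ε0
  map_ξ : ∀ n k l, μ.map (ξ n k l) = μ.map (ξ0 k)
  indep : iIndepFun (noise ε ξ) μ

theorem IsNoise.measurable_noise (hN : IsNoise μ ε ξ ε0 ξ0) :
    ∀ i, Measurable (noise ε ξ i)
  | .inl n => hN.measurable_ε n
  | .inr (n, k, l) => hN.measurable_ξ n k l

-- For `n = 1` the sum is empty, so this includes `X 1 = ε 1`.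
def IsINAR (ε : ℕ → Ω → ℕ) (ξ : ℕ → ℕ → ℕ → Ω → ℕ) (X : ℕ → Ω → ℕ) : Prop :=
  ∀ n ≥ 1, ∀ ω, X n ω = ε n ω + ∑ k ∈ Icc 1 (n - 1), ∑ l ∈ Icc 1 (X (n - k) ω), ξ n k l ω

variable {X : ℕ → Ω → ℕ}

theorem IsINAR.measurable_past (hX : IsINAR ε ξ X) {m M : ℕ} (hm : 1 ≤ m) (hmM : m ≤ M) :
    Measurable[noiseσ ε ξ {i | time i ≤ M}] (X m) := by
  induction m using Nat.strong_induction_on with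
  | _ m ih =>
    rw [show X m = _ from funext (hX m hm)]
    refine (measurable_noise_of_mem (i := .inl m) hmM).add
      (Finset.measurable_sum _ fun k hk => ?_)
    have hk := mem_Icc.mp hk
    exact measurable_sum_Icc_one (ih (m - k) (by omega) (by omega) (by omega))
      fun l => measurable_noise_of_mem (i := .inr (m, k, l)) hmM

def offspringIndex (M : ℕ) : (Σ _ : Fin M, ℕ) ↪ ℕ ⊕ ℕ × ℕ × ℕ where
  toFun p := .inr (M + 1, M - p.1, p.2)
  inj' := by
    rintro ⟨j, l⟩ ⟨j', l'⟩ h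
    simp only [Sum.inr.injEq, Prod.mk.injEq, true_and] at h
    obtain ⟨hj, rfl⟩ := h
    obtain rfl : j = j' := Fin.ext (by omega)
    rfl

/-- The noise variables making up `X (M + 1)` on the event `X (j + 1) = v j` for all `j < M`. -/
def activeNoise (M : ℕ) (v : Fin M → ℕ) : Finset (ℕ ⊕ ℕ × ℕ × ℕ) :=
  cons (.inl (M + 1)) ((univ.sigma fun j => Icc 1 (v j)).map (offspringIndex M))
    (by simp [offspringIndex])

theorem time_of_mem_activeNoise {M : ℕ} {v : Fin M → ℕ} {i : ℕ ⊕ ℕ × ℕ × ℕ}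
    (hi : i ∈ activeNoise M v) : time i = M + 1 := by
  simp only [activeNoise, mem_cons, Finset.mem_map] at hi
  rcases hi with rfl | ⟨p, -, rfl⟩ <;> rfl

theorem IsINAR.apply_succ_eq_sum_activeNoise (hX : IsINAR ε ξ X) (M : ℕ) (ω : Ω) :
    X (M + 1) ω = ∑ i ∈ activeNoise M (fun j => X (j + 1) ω), noise ε ξ i ω := by
  rw [hX (M + 1) (by omega) ω, activeNoise, sum_cons, sum_map, sum_sigma, Nat.add_sub_cancel,
    sum_Icc_one_eq_sum_fin_rev]
  congr 1
  refine Fintype.sum_congr _ _ fun j => ?_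
  rw [show M + 1 - (M - j) = j + 1 by omega]
  rfl

theorem IsNoise.lintegral_prod_pow_activeNoise (hN : IsNoise μ ε ξ ε0 ξ0)
    (M : ℕ) (v : Fin M → ℕ) (t : ℝ≥0∞) :
    ∫⁻ ω, ∏ i ∈ activeNoise M v, t ^ noise ε ξ i ω ∂μ
      = pgf μ ε0 t * ∏ j : Fin M, pgf μ (ξ0 (M - j)) t ^ v j := by
  rw [lintegral_prod_eq_prod_lintegral_of_indepFun _ (fun i ω => t ^ noise ε ξ i ω)
      (hN.indep.comp (fun _ n => t ^ n) fun _ => measurable_from_nat)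
      fun i => measurable_from_nat.comp (hN.measurable_noise i),
    activeNoise, prod_cons, prod_map, prod_sigma]
  congr 1
  · exact pgf_eq_of_map_eq (hN.measurable_ε _) hN.measurable_ε0 (hN.map_ε _) t
  · refine Fintype.prod_congr _ _ fun j => ?_
    change ∏ l ∈ Icc 1 (v j), pgf μ (ξ (M + 1) (M - j) l) t = _
    rw [prod_congr rfl fun l _ => pgf_eq_of_map_eq (hN.measurable_ξ _ _ _) (hN.measurable_ξ0 _)
        (hN.map_ξ _ _ _) t,
      prod_const, Nat.card_Icc, Nat.add_sub_cancel]

theorem IsINAR.measurable_past_path (hX : IsINAR ε ξ X) (M : ℕ) :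
    Measurable[noiseσ ε ξ {i | time i ≤ M}] fun ω (j : Fin M) => X (j + 1) ω := by
  let _ : MeasurableSpace Ω := noiseσ ε ξ {i | time i ≤ M}
  exact measurable_pi_lambda _ fun j => hX.measurable_past (by omega) (by omega)

theorem IsINAR.lintegral_prod_pow_succ (hX : IsINAR ε ξ X) (hN : IsNoise μ ε ξ ε0 ξ0)
    (s : ℕ → ℝ≥0∞) (M : ℕ) :
    ∫⁻ ω, ∏ m ∈ Icc 1 (M + 1), s m ^ X m ω ∂μ
      = pgf μ ε0 (s (M + 1)) *
        ∫⁻ ω, ∏ m ∈ Icc 1 M, (s m * pgf μ (ξ0 (M + 1 - m)) (s (M + 1))) ^ X m ω ∂μ := by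
  set t := s (M + 1)
  have hpast : ∀ m ∈ Icc 1 M, Measurable[noiseσ ε ξ {i | time i ≤ M}] (X m) := fun m hm =>
    hX.measurable_past (mem_Icc.1 hm).1 (mem_Icc.1 hm).2
  have hX_meas : ∀ m ∈ Icc 1 M, Measurable (X m) := fun m hm =>
    (hpast m hm).mono (noiseσ_le hN.measurable_noise _) le_rfl
  -- `X 1, …, X M` only see noise up to time `M`, the fresh part of `X (M + 1)` only later noise.
  have hfreeze := lintegral_mul_comp_eq_of_indep (μ := μ) (noiseσ_le hN.measurable_noise _)
    (noiseσ_le hN.measurable_noise _) (indep_noiseσ_compl hN.measurable_noise hN.indep _)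
    (Y := fun ω (j : Fin M) => X (j + 1) ω)
    (hX.measurable_past_path M)
    (φ := fun ω => ∏ m ∈ Icc 1 M, s m ^ X m ω)
    (Finset.measurable_prod _ fun m hm => measurable_from_nat.comp (hpast m hm))
    (ψ := fun v ω => ∏ i ∈ activeNoise M v, t ^ noise ε ξ i ω)
    fun v => Finset.measurable_prod _ fun i hi => measurable_from_nat.comp
      (measurable_noise_of_mem (by simp [time_of_mem_activeNoise hi]))
  calc ∫⁻ ω, ∏ m ∈ Icc 1 (M + 1), s m ^ X m ω ∂μ
      = ∫⁻ ω, (∏ m ∈ Icc 1 M, s m ^ X m ω) *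
          ∏ i ∈ activeNoise M (fun j => X (j + 1) ω), t ^ noise ε ξ i ω ∂μ := by
        simp_rw [prod_Icc_succ_top (by omega : 1 ≤ M + 1), hX.apply_succ_eq_sum_activeNoise M,
          prod_pow_eq_pow_sum]
        rfl
    _ = ∫⁻ ω, (∏ m ∈ Icc 1 M, s m ^ X m ω) *
          (pgf μ ε0 t * ∏ j : Fin M, pgf μ (ξ0 (M - j)) t ^ X (j + 1) ω) ∂μ := by
        rw [hfreeze]
        simp_rw [hN.lintegral_prod_pow_activeNoise]
    _ = pgf μ ε0 t *
          ∫⁻ ω, ∏ m ∈ Icc 1 M, (s m * pgf μ (ξ0 (M + 1 - m)) t) ^ X m ω ∂μ := by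
        have hmeas :
            Measurable fun ω => ∏ m ∈ Icc 1 M, (s m * pgf μ (ξ0 (M + 1 - m)) t) ^ X m ω :=
          Finset.measurable_prod _ fun m hm => measurable_from_nat.comp (hX_meas m hm)
        rw [← lintegral_const_mul _ hmeas]
        refine lintegral_congr fun ω => ?_
        simp_rw [mul_pow, prod_mul_distrib, prod_Icc_one_eq_prod_fin (fun m => _ ^ X m ω),
          Nat.add_sub_add_right]
        ring

/-- The exponent carried by `X m` once `X n, …, X (n + 1 - r)` have been integrated out, where
`d = n + 1 - m`. -/
noncomputable def peeledExponent (μ : Measure Ω) (ξ0 : ℕ → Ω → ℕ) (z : ℝ≥0∞) (w : ℕ → ℝ≥0∞)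
    (r d : ℕ) : ℝ≥0∞ :=
  z * ∏ j ∈ Icc 1 r, pgf μ (ξ0 (d - j)) (w j)

theorem IsINAR.lintegral_prod_pow_peeledExponent [IsProbabilityMeasure μ] (hX : IsINAR ε ξ X)
    (hN : IsNoise μ ε ξ ε0 ξ0) {z : ℝ≥0∞} {w : ℕ → ℝ≥0∞}
    (hw : ∀ r, w (r + 1) = peeledExponent μ ξ0 z w r (r + 1)) (N r : ℕ) :
    ∫⁻ ω, ∏ m ∈ Icc 1 N, peeledExponent μ ξ0 z w r (N + r + 1 - m) ^ X m ω ∂μ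
      = ∏ k ∈ Icc (r + 1) (r + N), pgf μ ε0 (w k) := by
  induction N generalizing r with
  | zero => simp
  | succ N ih =>
    have hexp : ∀ m ∈ Icc 1 N,
        peeledExponent μ ξ0 z w r (N + 1 + r + 1 - m) * pgf μ (ξ0 (N + 1 - m)) (w (r + 1))
          = peeledExponent μ ξ0 z w (r + 1) (N + (r + 1) + 1 - m) := fun m hm => by
      have hm := mem_Icc.1 hm
      rw [peeledExponent, peeledExponent, prod_Icc_succ_top (by omega), mul_assoc,
        show N + (r + 1) + 1 - m - (r + 1) = N + 1 - m by omega,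
        show N + (r + 1) + 1 - m = N + 1 + r + 1 - m by omega]
    rw [hX.lintegral_prod_pow_succ hN, show N + 1 + r + 1 - (N + 1) = r + 1 by omega, ← hw,
      ← add_assoc, Icc_eq_cons_Ioc (show r + 1 ≤ r + N + 1 by omega), prod_cons,
      ← Icc_add_one_left_eq_Ioc, show r + N + 1 = r + 1 + N by omega, ← ih]
    congr 2 with ω
    exact prod_congr rfl fun m hm => by rw [hexp m hm]

theorem IsINAR.lintegral_pow_sum [IsProbabilityMeasure μ] (hX : IsINAR ε ξ X)
    (hN : IsNoise μ ε ξ ε0 ξ0) {z : ℝ≥0∞} {w : ℕ → ℝ≥0∞}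
    (hw : ∀ k ≥ 1, w k = z * ∏ j ∈ Icc 1 (k - 1), pgf μ (ξ0 (k - j)) (w j)) (n : ℕ) :
    ∫⁻ ω, z ^ ∑ k ∈ Icc 1 n, X k ω ∂μ = ∏ k ∈ Icc 1 n, pgf μ ε0 (w k) := by
  have h := hX.lintegral_prod_pow_peeledExponent hN (fun r => hw (r + 1) (by omega)) n 0
  simpa [peeledExponent, prod_pow_eq_pow_sum] using h

end INAR

open INAR in
/-- Moment generating function identity for the INAR(∞) process with empty history:
`E[exp(θ ∑_{k=1}^n X_k)] = ∏_{k=1}^n E[e^{f_k(θ) ε}]` where `f₁(θ) = θ` and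
`f_k(θ) = θ + ∑_{j=1}^{k-1} log E[e^{f_j(θ) ξ_{k-j}}]`. -/
theorem inar_mgf_identity {Ω : Type*} [MeasurableSpace Ω] (μ : Measure Ω)
    [IsProbabilityMeasure μ]
    (ε : ℕ → Ω → ℕ) (ξ : ℕ → ℕ → ℕ → Ω → ℕ) (ε0 : Ω → ℕ) (ξ0 : ℕ → Ω → ℕ)
    (hmeasε : ∀ n, Measurable (ε n)) (hmeasξ : ∀ n k l, Measurable (ξ n k l))
    (hmeasε0 : Measurable ε0) (hmeasξ0 : ∀ k, Measurable (ξ0 k))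
    -- the ε_n are identically distributed as ε, the ξ_l^{(n,k)} as ξ_k
    (hεdist : ∀ n, μ.map (ε n) = μ.map ε0)
    (hξdist : ∀ n k l, μ.map (ξ n k l) = μ.map (ξ0 k))
    -- mutual independence of the whole family
    (hindep : iIndepFun
      (Sum.elim ε (fun p : ℕ × ℕ × ℕ => ξ p.1 p.2.1 p.2.2)) μ)
    -- INAR(∞) dynamics with empty history
    (X : ℕ → Ω → ℕ) (hX1 : X 1 = ε 1)
    (hXn : ∀ n ≥ 2, ∀ ω, X n ω = ε n ω +
      ∑ k ∈ Finset.Icc 1 (n - 1), ∑ l ∈ Finset.Icc 1 (X (n - k) ω), ξ n k l ω)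
    -- the recursively defined exponents f_k
    (θ : ℝ) (f : ℕ → ℝ) (hf1 : f 1 = θ)
    (hfk : ∀ k ≥ 2, f k = θ + ∑ j ∈ Finset.Icc 1 (k - 1),
      Real.log (∫ ω, Real.exp (f j * (ξ0 (k - j) ω : ℝ)) ∂μ))
    -- finiteness of all the expressions involved
    (hintξ : ∀ k j, Integrable (fun ω => Real.exp (f j * (ξ0 k ω : ℝ))) μ)
    (hintε : ∀ k, Integrable (fun ω => Real.exp (f k * (ε0 ω : ℝ))) μ)
    (hintX : ∀ n : ℕ, 1 ≤ n →
      Integrable (fun ω => Real.exp (θ * ∑ k ∈ Finset.Icc 1 n, (X k ω : ℝ))) μ)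
    (n : ℕ) (hn : 1 ≤ n) :
    ∫ ω, Real.exp (θ * ∑ k ∈ Finset.Icc 1 n, (X k ω : ℝ)) ∂μ =
      ∏ k ∈ Finset.Icc 1 n, ∫ ω, Real.exp (f k * (ε0 ω : ℝ)) ∂μ := by
  have hX : IsINAR ε ξ X := fun m hm ω => by
    obtain rfl | hm := hm.eq_or_lt
    · simp [hX1]
    · exact hXn m hm ω
  have hN : IsNoise μ ε ξ ε0 ξ0 := ⟨hmeasε, hmeasξ, hmeasε0, hmeasξ0, hεdist, hξdist, hindep⟩
  have hw : ∀ k ≥ 1, ENNReal.ofReal (Real.exp (f k)) = ENNReal.ofReal (Real.exp θ) *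
      ∏ j ∈ Icc 1 (k - 1), pgf μ (ξ0 (k - j)) (ENNReal.ofReal (Real.exp (f j))) := by
    intro k hk
    obtain rfl | hk := hk.eq_or_lt
    · simp [hf1]
    rw [hfk k hk, Real.exp_add, Real.exp_sum, ENNReal.ofReal_mul (Real.exp_pos _).le,
      ENNReal.ofReal_prod_of_nonneg fun j _ => (Real.exp_pos _).le]
    refine congrArg _ (prod_congr rfl fun j _ => ?_)
    rw [Real.exp_log (integral_exp_pos (hintξ _ _)), ofReal_integral_exp_mul_eq_pgf (hintξ _ _)]
  have hLHS : ENNReal.ofReal (∫ ω, Real.exp (θ * ∑ k ∈ Icc 1 n, (X k ω : ℝ)) ∂μ)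
      = ∫⁻ ω, ENNReal.ofReal (Real.exp θ) ^ ∑ k ∈ Icc 1 n, X k ω ∂μ := by
    simp_rw [← Nat.cast_sum] at hintX ⊢
    exact ofReal_integral_exp_mul_eq_pgf (hintX n hn)
  have hRHS : ENNReal.ofReal (∏ k ∈ Icc 1 n, ∫ ω, Real.exp (f k * (ε0 ω : ℝ)) ∂μ)
      = ∏ k ∈ Icc 1 n, pgf μ ε0 (ENNReal.ofReal (Real.exp (f k))) := by
    rw [ENNReal.ofReal_prod_of_nonneg fun k _ => integral_nonneg fun _ => (Real.exp_pos _).le]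
    exact prod_congr rfl fun k _ => ofReal_integral_exp_mul_eq_pgf (hintε k)
  refine (ENNReal.ofReal_eq_ofReal_iff (integral_nonneg fun _ => (Real.exp_pos _).le)
    (prod_nonneg fun _ _ => integral_nonneg fun _ => (Real.exp_pos _).le)).1 ?_
  rw [hLHS, hRHS, hX.lintegral_pow_sum hN hw]
end

section
/- Let ε and ξ_k (k ≥ 1) be Poisson with means α₀ and α_k respectively, ‖α‖₁ := Σ_{k≥1} α_k < 1. For θ ≤ θ_c := ‖α‖₁ - log‖α‖₁ - 1, the equation f = θ + ‖α‖₁(e^f - 1) has a smallest solution f_∞(θ) with f_∞(θ) ≤ -log‖α‖₁, f_∞(0) = 0, and f_∞ is increasing on (-∞, θ_c]. Moreover f_∞'(θ) = 1/(1 - ‖α‖₁ e^{f_∞(θ)}) → ∞ as θ ↑ θ_c. -/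
/-!
Writing `g(f) = f - A (eᶠ - 1)`, the equation reads `g(f) = θ`. Since `g' = 1 - A eᶠ`, the map
`g` is strictly increasing on `(-∞, -log A]` and maps it onto `(-∞, θ_c]`, with `θ_c = g(-log A)`;
every solution beyond `-log A` is larger, so the smallest solution is the inverse of this branch.
The inverse function theorem gives `f_∞' = 1 / g'(f_∞)`, and `g'(-log A) = 0` makes it blow up
at `θ_c`.
-/

open MeasureTheory ProbabilityTheory Filter Topology NNReal
open Set Real

theorem Set.BijOn.strictMonoOn_invFunOn {α β : Type*} [LinearOrder α] [Preorder β] [Nonempty α]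
    {g : α → β} {s : Set α} {t : Set β} (hbij : BijOn g s t) (hg : StrictMonoOn g s) :
    StrictMonoOn (Function.invFunOn g s) t := by
  intro a ha b hb hab
  have hinv := hbij.surjOn.rightInvOn_invFunOn
  have hmaps := hbij.surjOn.mapsTo_invFunOn
  exact (hg.lt_iff_lt (hmaps ha) (hmaps hb)).1 (by rwa [hinv ha, hinv hb])

lemma one_sub_mul_exp_pos {A f : ℝ} (hA : 0 < A) (hf : f < -log A) : 0 < 1 - A * exp f := by
  have : A * exp f < A * exp (-log A) := by gcongr
  rwa [exp_neg, exp_log hA, mul_inv_cancel₀ hA.ne', ← sub_pos] at this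

noncomputable def hawkesMap (A f : ℝ) : ℝ := f - A * (exp f - 1)

lemma hasDerivAt_hawkesMap (A f : ℝ) : HasDerivAt (hawkesMap A) (1 - A * exp f) f :=
  (hasDerivAt_id' f).fun_sub (((hasDerivAt_exp f).sub_const 1).const_mul A)

lemma continuous_hawkesMap (A : ℝ) : Continuous (hawkesMap A) := by
  unfold hawkesMap
  fun_prop

lemma hawkesMap_neg_log {A : ℝ} (hA : 0 < A) : hawkesMap A (-log A) = A - log A - 1 := by
  rw [hawkesMap, exp_neg, exp_log hA, mul_sub, mul_inv_cancel₀ hA.ne']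
  ring

lemma hawkesMap_eq_iff {A f θ : ℝ} : hawkesMap A f = θ ↔ f = θ + A * (exp f - 1) := by
  rw [hawkesMap]
  constructor <;> intro h <;> linarith

lemma hawkesMap_zero (A : ℝ) : hawkesMap A 0 = 0 := by
  simp [hawkesMap]

lemma strictMonoOn_hawkesMap {A : ℝ} (hA : 0 < A) : StrictMonoOn (hawkesMap A) (Iic (-log A)) := by
  refine strictMonoOn_of_deriv_pos (convex_Iic _) (continuous_hawkesMap A).continuousOn ?_
  intro f hf
  rw [interior_Iic] at hf
  rw [(hasDerivAt_hawkesMap A f).deriv]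
  exact one_sub_mul_exp_pos hA hf

lemma bijOn_hawkesMap {A : ℝ} (hA : 0 < A) :
    BijOn (hawkesMap A) (Iic (-log A)) (Iic (A - log A - 1)) := by
  have hmono := strictMonoOn_hawkesMap hA
  refine ⟨fun f hf => ?_, hmono.injOn, fun θ hθ => ?_⟩
  · rw [← hawkesMap_neg_log hA]
    exact hmono.monotoneOn hf self_mem_Iic hf
  -- `m ≤ θ - A` gives `g(m) ≤ m + A ≤ θ`, and `g(-log A) = θ_c ≥ θ`.
  set m := min (θ - A) (-log A)
  have hgm : hawkesMap A m ≤ θ := by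
    have : m ≤ θ - A := min_le_left _ _
    have : 0 < A * exp m := by positivity
    rw [hawkesMap]
    linarith
  have hθ' : θ ≤ hawkesMap A (-log A) := by rwa [hawkesMap_neg_log hA]
  obtain ⟨f, hf, rfl⟩ := intermediate_value_Icc (min_le_right _ _)
    (continuous_hawkesMap A).continuousOn ⟨hgm, hθ'⟩
  exact ⟨f, hf.2, rfl⟩

noncomputable def hawkesFInf (A : ℝ) : ℝ → ℝ := Function.invFunOn (hawkesMap A) (Iic (-log A))

section hawkesFInf

variable {A : ℝ} (hA : 0 < A)
include hA

lemma hawkesFInf_le {θ : ℝ} (hθ : θ ≤ A - log A - 1) : hawkesFInf A θ ≤ -log A :=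
  (bijOn_hawkesMap hA).surjOn.mapsTo_invFunOn hθ

lemma hawkesMap_hawkesFInf {θ : ℝ} (hθ : θ ≤ A - log A - 1) :
    hawkesMap A (hawkesFInf A θ) = θ :=
  (bijOn_hawkesMap hA).surjOn.rightInvOn_invFunOn hθ

lemma hawkesFInf_hawkesMap {f : ℝ} (hf : f ≤ -log A) : hawkesFInf A (hawkesMap A f) = f :=
  (bijOn_hawkesMap hA).injOn.leftInvOn_invFunOn hf

lemma strictMonoOn_hawkesFInf : StrictMonoOn (hawkesFInf A) (Iic (A - log A - 1)) :=
  (bijOn_hawkesMap hA).strictMonoOn_invFunOn (strictMonoOn_hawkesMap hA)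

lemma image_hawkesFInf : hawkesFInf A '' Iic (A - log A - 1) = Iic (-log A) :=
  (bijOn_hawkesMap hA).symm (bijOn_hawkesMap hA).invOn_invFunOn.symm |>.image_eq

lemma hawkesFInf_critical : hawkesFInf A (A - log A - 1) = -log A := by
  simpa only [hawkesMap_neg_log hA] using hawkesFInf_hawkesMap hA le_rfl

lemma hawkesFInf_lt {θ : ℝ} (hθ : θ < A - log A - 1) : hawkesFInf A θ < -log A :=
  hawkesFInf_critical hA ▸ strictMonoOn_hawkesFInf hA hθ.le self_mem_Iic hθ

lemma hawkesFInf_le_of_hawkesMap_eq {θ y : ℝ} (hθ : θ ≤ A - log A - 1) (hy : hawkesMap A y = θ) :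
    hawkesFInf A θ ≤ y := by
  rcases le_or_gt y (-log A) with hyL | hyL
  · rw [← hy, hawkesFInf_hawkesMap hA hyL]
  · exact (hawkesFInf_le hA hθ).trans hyL.le

lemma continuousAt_hawkesFInf {θ : ℝ} (hθ : θ < A - log A - 1) :
    ContinuousAt (hawkesFInf A) θ :=
  (strictMonoOn_hawkesFInf hA).continuousAt_of_image_mem_nhds (Iic_mem_nhds hθ)
    (by rw [image_hawkesFInf hA]; exact Iic_mem_nhds (hawkesFInf_lt hA hθ))

lemma tendsto_hawkesFInf_left :
    Tendsto (hawkesFInf A) (𝓝[<] (A - log A - 1)) (𝓝 (-log A)) := by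
  have hcont := (strictMonoOn_hawkesFInf hA).continuousWithinAt_left_of_image_mem_nhdsWithin
    self_mem_nhdsWithin
    (by rw [image_hawkesFInf hA, hawkesFInf_critical hA]; exact self_mem_nhdsWithin)
  rw [ContinuousWithinAt, hawkesFInf_critical hA] at hcont
  exact hcont.mono_left (nhdsWithin_mono _ Iio_subset_Iic_self)

lemma hasDerivAt_hawkesFInf {θ : ℝ} (hθ : θ < A - log A - 1) :
    HasDerivAt (hawkesFInf A) (1 / (1 - A * exp (hawkesFInf A θ))) θ := by
  rw [one_div]
  refine (hasDerivAt_hawkesMap A _).of_local_left_inverse (continuousAt_hawkesFInf hA hθ)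
    (one_sub_mul_exp_pos hA (hawkesFInf_lt hA hθ)).ne' ?_
  filter_upwards [Iio_mem_nhds hθ] with y hy
  exact hawkesMap_hawkesFInf hA hy.le

lemma tendsto_hawkesFInf_deriv_atTop :
    Tendsto (fun θ => 1 / (1 - A * exp (hawkesFInf A θ))) (𝓝[<] (A - log A - 1)) atTop := by
  have hlim : Tendsto (fun θ => 1 - A * exp (hawkesFInf A θ)) (𝓝[<] (A - log A - 1)) (𝓝 0) := by
    have := ((continuous_exp.tendsto _).comp (tendsto_hawkesFInf_left hA)).const_mul A
    simpa [exp_neg, exp_log hA, mul_inv_cancel₀ hA.ne'] using this.const_sub 1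
  have hpos : ∀ᶠ θ in 𝓝[<] (A - log A - 1), 1 - A * exp (hawkesFInf A θ) ∈ Ioi 0 := by
    filter_upwards [self_mem_nhdsWithin] with θ hθ
    exact one_sub_mul_exp_pos hA (hawkesFInf_lt hA hθ)
  simpa only [one_div, Function.comp_def] using
    tendsto_inv_nhdsGT_zero.comp (tendsto_nhdsWithin_iff.2 ⟨hlim, hpos⟩)

end hawkesFInf

theorem hawkes_finf_properties_general
    (A : ℝ)
    (hApos : 0 < A) (hAlt : A < 1)
    (θc : ℝ) (hθc : θc = A - Real.log A - 1) :
    ∃ finf : ℝ → ℝ,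
      (∀ θ ≤ θc, finf θ = θ + A * (Real.exp (finf θ) - 1) ∧
        ∀ y : ℝ, y = θ + A * (Real.exp y - 1) → finf θ ≤ y) ∧
      (∀ θ ≤ θc, finf θ ≤ -Real.log A) ∧
      finf 0 = 0 ∧
      StrictMonoOn finf (Set.Iic θc) ∧
      (∀ θ < θc, HasDerivAt finf (1 / (1 - A * Real.exp (finf θ))) θ) ∧
      Tendsto (fun θ => 1 / (1 - A * Real.exp (finf θ))) (𝓝[<] θc) atTop := by
  subst hθc
  have hL : 0 ≤ -log A := neg_nonneg.2 (log_nonpos hApos.le hAlt.le)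
  refine ⟨hawkesFInf A, fun θ hθ => ⟨?_, fun y hy => ?_⟩, fun θ => hawkesFInf_le hApos,
    ?_, strictMonoOn_hawkesFInf hApos, fun θ => hasDerivAt_hawkesFInf hApos,
    tendsto_hawkesFInf_deriv_atTop hApos⟩
  · exact hawkesMap_eq_iff.1 (hawkesMap_hawkesFInf hApos hθ)
  · exact hawkesFInf_le_of_hawkesMap_eq hApos hθ (hawkesMap_eq_iff.2 hy)
  · simpa only [hawkesMap_zero] using hawkesFInf_hawkesMap hApos hL

/-- Characterization of the limiting exponent `f_∞` for the discrete-time linear Hawkes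
process: for `θ ≤ θ_c = ‖α‖₁ - log‖α‖₁ - 1` the equation `f = θ + ‖α‖₁(e^f - 1)` has a
smallest solution `f_∞(θ)` with `f_∞(θ) ≤ -log‖α‖₁`, `f_∞(0) = 0`, `f_∞` increasing on
`(-∞, θ_c]`, `f_∞'(θ) = 1/(1 - ‖α‖₁ e^{f_∞(θ)})`, and `f_∞'(θ) → ∞` as `θ ↑ θ_c`. -/
theorem hawkes_finf_properties {Ω : Type*} [MeasurableSpace Ω] (μ : Measure Ω)
    [IsProbabilityMeasure μ]
    (α0 : ℝ≥0) (hα0 : 0 < α0) (α : ℕ → ℝ≥0)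
    (ε : Ω → ℕ) (hmeasε : Measurable ε) (hε : μ.map ε = poissonMeasure α0)
    (ξ : ℕ → Ω → ℕ) (hmeasξ : ∀ k, Measurable (ξ k))
    (hξ : ∀ k : ℕ, 1 ≤ k → μ.map (ξ k) = poissonMeasure (α k))
    (A : ℝ) (hA : A = ∑' k : ℕ, (α (k + 1) : ℝ))
    (hsum : Summable (fun k : ℕ => (α (k + 1) : ℝ)))
    (hApos : 0 < A) (hAlt : A < 1)
    (θc : ℝ) (hθc : θc = A - Real.log A - 1) :
    ∃ finf : ℝ → ℝ,
      (∀ θ ≤ θc, finf θ = θ + A * (Real.exp (finf θ) - 1) ∧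
        ∀ y : ℝ, y = θ + A * (Real.exp y - 1) → finf θ ≤ y) ∧
      (∀ θ ≤ θc, finf θ ≤ -Real.log A) ∧
      finf 0 = 0 ∧
      StrictMonoOn finf (Set.Iic θc) ∧
      (∀ θ < θc, HasDerivAt finf (1 / (1 - A * Real.exp (finf θ))) θ) ∧
      Tendsto (fun θ => 1 / (1 - A * Real.exp (finf θ))) (𝓝[<] θc) atTop :=
  hawkes_finf_properties_general A hApos hAlt θc hθc
end
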